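/- Every g ∈ GL_r(K_v) factors as g = g_1 g_2 with g_1 ∈ GL_r(K) (viewed inside GL_r(K_v) via the canonical embedding K ↪ K_v) and g_2 ∈ GL_r(O_v). -/

import Mathlib

/-!
`K` is dense in `K_v`, so `g` can be approximated by a matrix `A` with entries in `K` so
closely that `g⁻¹ A ≡ 1` modulo the maximal ideal of `O_v`. The determinant of such a matrix
reduces to `1` in the residue field, so `g⁻¹ A ∈ GL_r(O_v)`, and `g = A (g⁻¹ A)⁻¹`.
-/

open Matrix IsDedekindDomain

/-- The maximal ideal of a discrete valuation ring, as a height-one prime. -/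
noncomputable def dvrHeightOnePrime (O : Type*) [CommRing O] [IsDomain O]
    [IsDiscreteValuationRing O] : HeightOneSpectrum O where
  asIdeal := IsLocalRing.maximalIdeal O
  isPrime := Ideal.IsMaximal.isPrime (IsLocalRing.maximalIdeal.isMaximal O)
  ne_bot := IsDiscreteValuationRing.not_a_field O

theorem Matrix.isUnit_one_add_of_forall_mem_maximalIdeal {R n : Type*} [CommRing R]
    [IsLocalRing R] [Fintype n] [DecidableEq n] (E : Matrix n n R)
    (hE : ∀ i j, E i j ∈ IsLocalRing.maximalIdeal R) : IsUnit (1 + E) := by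
  have hE₀ : (IsLocalRing.residue R).mapMatrix E = 0 :=
    Matrix.ext fun i j => (IsLocalRing.residue_eq_zero_iff _).2 (hE i j)
  rw [Matrix.isUnit_iff_isUnit_det, ← isUnit_map_iff (IsLocalRing.residue R), RingHom.map_det,
    map_add, map_one, hE₀, add_zero, det_one]
  exact isUnit_one

namespace Valued

variable {L Γ₀ : Type*} [LinearOrderedCommGroupWithZero Γ₀]

theorem isOpen_setOf_lt_one [Ring L] [Valued L Γ₀] : IsOpen {x : L | v x < 1} := by
  simpa only [Valuation.restrict_lt_one_iff] using isOpen_ball L 1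

theorem exists_map_forall_mul_sub_lt_one {K : Type*} [Ring L] [Valued L Γ₀] {n : Type*}
    [Fintype n] {f : K → L} (hf : DenseRange f) (B M : Matrix n n L) :
    ∃ A : Matrix n n K, ∀ i j, v ((B * (A.map f - M)) i j) < 1 := by
  have hopen : IsOpen {A : Matrix n n L | ∀ i j, v ((B * (A - M)) i j) < 1} := by
    simp only [Set.ofPred_forall]
    exact isOpen_iInter_of_finite fun i => isOpen_iInter_of_finite fun j =>
      isOpen_setOf_lt_one.preimage <| (continuous_apply_apply i j).comp <|
        continuous_const.matrix_mul (continuous_id.sub continuous_const)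
  have hdense : DenseRange fun A : Matrix n n K => A.map f :=
    DenseRange.piMap fun _ => DenseRange.piMap fun _ => hf
  exact hdense.exists_mem_open hopen ⟨M, by simp⟩

theorem exists_eq_mul_map_valuationSubring {K : Type*} [Ring K] [Field L] [Valued L Γ₀]
    {n : Type*} [Fintype n] [DecidableEq n] {f : K →+* L} (hf : DenseRange f) (g : GL n L) :
    ∃ g₁ : GL n L, ∃ u : GL n v.valuationSubring,
      (∀ i j, (g₁ : Matrix n n L) i j ∈ f.range) ∧
      g = g₁ * GeneralLinearGroup.map v.valuationSubring.subtype u := by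
  obtain ⟨A, hA⟩ := exists_map_forall_mul_sub_lt_one hf (g⁻¹ : GL n L).val g.val
  set E : Matrix n n L := (g⁻¹ : GL n L).val * (A.map f - g.val)
  let E' : Matrix n n v.valuationSubring := fun i j => ⟨E i j, (hA i j).le⟩
  have hE' : ∀ i j, E' i j ∈ IsLocalRing.maximalIdeal v.valuationSubring := fun i j =>
    (Valuation.mem_maximalIdeal_iff _ v).2 (hA i j)
  set u := (isUnit_one_add_of_forall_mem_maximalIdeal E' hE').unit
  have hu : (GeneralLinearGroup.map v.valuationSubring.subtype u).val = 1 + E := by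
    change v.valuationSubring.subtype.mapMatrix (1 + E') = 1 + E
    rw [map_add, map_one]
    rfl
  refine ⟨g * GeneralLinearGroup.map v.valuationSubring.subtype u, u⁻¹, fun i j => ?_, ?_⟩
  · have : (g * GeneralLinearGroup.map v.valuationSubring.subtype u).val = A.map f := by
      rw [Units.val_mul, hu, mul_add, mul_one, ← Matrix.mul_assoc, ← Units.val_mul,
        mul_inv_cancel, Units.val_one, Matrix.one_mul, add_sub_cancel]
    rw [this]
    exact ⟨A i j, rfl⟩
  · rw [map_inv, mul_inv_cancel_right]

end Valued

/-- **Iwasawa-type decomposition at a completed place.** Let `O` be a DVR with fraction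
field `K`, let `K_v` be the completion of `K` at the valuation of `O` and `O_v ⊆ K_v` its
ring of integers. Every `g ∈ GL_r(K_v)` factors as `g = g₁ g₂` where `g₁` has all entries
in (the image of) `K` and `g₂` together with `g₂⁻¹` has all entries in `O_v`. -/
theorem exists_factorization_rational_mul_integral
    (O K : Type*) [CommRing O] [IsDomain O] [IsDiscreteValuationRing O]
    [Field K] [Algebra O K] [IsFractionRing O K] (r : ℕ)
    (g : GL (Fin r) ((dvrHeightOnePrime O).adicCompletion K)) :
    ∃ g₁ g₂ : GL (Fin r) ((dvrHeightOnePrime O).adicCompletion K),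
      (∀ i j, (g₁ : Matrix (Fin r) (Fin r) ((dvrHeightOnePrime O).adicCompletion K)) i j ∈
        (algebraMap K ((dvrHeightOnePrime O).adicCompletion K)).range) ∧
      (∀ i j, (g₂ : Matrix (Fin r) (Fin r) ((dvrHeightOnePrime O).adicCompletion K)) i j ∈
        (dvrHeightOnePrime O).adicCompletionIntegers K) ∧
      (∀ i j, ((g₂⁻¹ : GL (Fin r) ((dvrHeightOnePrime O).adicCompletion K)) :
          Matrix (Fin r) (Fin r) ((dvrHeightOnePrime O).adicCompletion K)) i j ∈
        (dvrHeightOnePrime O).adicCompletionIntegers K) ∧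
      g = g₁ * g₂ := by
  obtain ⟨g₁, u, hg₁, rfl⟩ := Valued.exists_eq_mul_map_valuationSubring
    (HeightOneSpectrum.denseRange_algebraMap K (dvrHeightOnePrime O)) g
  refine ⟨g₁, GeneralLinearGroup.map Valued.v.valuationSubring.subtype u, hg₁,
    fun i j => (u.val i j).2, fun i j => ?_, rfl⟩
  rw [← map_inv]
  exact (u⁻¹.val i j).2
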